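/- arXiv:2306.06421 — 7 statements merged into one kernel-verified Lean document; each statement's English description precedes it below -/
import Mathlib

section
/- Let α, v*, M₂ be positive real constants and M₁ ∈ ℝ. The function f(s) = 16α(v*)²/M₂ − s·log((2v* + |M₁|s)/(v* + |M₁|s)) is strictly decreasing on (0, ∞). -/
/-!
Write `a = v* + |M₁|s` and `b = 2v* + |M₁|s`, so `b - a = v*`. The derivative of
`s ↦ s · log (b / a)` is `log (b / a) - |M₁| v* s / (a b)`, and the tangent-line bound
`log (b / a) > 1 - a / b = v* / b` turns it into something larger than
`v* / b - |M₁| v* s / (a b) = v*² / (a b) > 0`.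
-/

open Real Set

lemma sub_div_lt_log_div {a b : ℝ} (ha : 0 < a) (hab : a < b) : (b - a) / b < log (b / a) := by
  have hb : 0 < b := ha.trans hab
  have h := log_lt_sub_one_of_pos (div_pos ha hb) ((div_lt_one hb).mpr hab).ne
  rw [log_div ha.ne' hb.ne'] at h
  rw [log_div hb.ne' ha.ne']
  have : a / b - 1 = -((b - a) / b) := by field_simp; ring
  linarith

section MulLogDiv

variable {v m x : ℝ}

lemma hasDerivAt_mul_log_div (hv : 0 < v) (hm : 0 ≤ m) (hx : 0 ≤ x) :
    HasDerivAt (fun s => s * log ((2 * v + m * s) / (v + m * s)))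
      (log ((2 * v + m * x) / (v + m * x)) - m * v * x / ((v + m * x) * (2 * v + m * x))) x := by
  have ha : 0 < v + m * x := by positivity
  have hb : 0 < 2 * v + m * x := by positivity
  have hlin : ∀ c : ℝ, HasDerivAt (fun s => c + m * s) m x := fun c => by
    simpa using ((hasDerivAt_id x).const_mul m).const_add c
  have hquot := ((hlin (2 * v)).div (hlin v) ha.ne').log (div_pos hb ha).ne'
  refine ((hasDerivAt_id x).mul hquot).congr_deriv ?_
  simp only [id, Pi.div_apply]
  field_simp
  ring

lemma log_div_sub_pos (hv : 0 < v) (hm : 0 ≤ m) (hx : 0 ≤ x) :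
    0 < log ((2 * v + m * x) / (v + m * x)) - m * v * x / ((v + m * x) * (2 * v + m * x)) := by
  have ha : 0 < v + m * x := by positivity
  have hb : 0 < 2 * v + m * x := by positivity
  have hlog : v / (2 * v + m * x) < log ((2 * v + m * x) / (v + m * x)) := by
    have h := sub_div_lt_log_div ha (by linarith : v + m * x < 2 * v + m * x)
    rwa [show 2 * v + m * x - (v + m * x) = v by ring] at h
  have hgap : v / (2 * v + m * x) - m * v * x / ((v + m * x) * (2 * v + m * x)) =
      v ^ 2 / ((v + m * x) * (2 * v + m * x)) := by
    field_simp
    ring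
  have : 0 < v ^ 2 / ((v + m * x) * (2 * v + m * x)) := by positivity
  linarith

lemma strictMonoOn_mul_log_div (hv : 0 < v) (hm : 0 ≤ m) :
    StrictMonoOn (fun s => s * log ((2 * v + m * s) / (v + m * s))) (Ici 0) := by
  refine strictMonoOn_of_hasDerivWithinAt_pos (convex_Ici 0)
    (fun x hx => (hasDerivAt_mul_log_div hv hm hx).continuousAt.continuousWithinAt)
    (fun x hx => (hasDerivAt_mul_log_div hv hm (interior_subset hx)).hasDerivWithinAt)
    (fun x hx => log_div_sub_pos hv hm (interior_subset hx))

end MulLogDiv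

theorem f_strictAntiOn_general
    (α vs M₂ M₁ : ℝ) (hvs : 0 < vs) :
    StrictAntiOn
      (fun s : ℝ => 16 * α * vs ^ 2 / M₂ -
        s * Real.log ((2 * vs + |M₁| * s) / (vs + |M₁| * s)))
      (Set.Ioi 0) := by
  intro x hx y hy hxy
  have := strictMonoOn_mul_log_div hvs (abs_nonneg M₁)
    (Ioi_subset_Ici_self hx) (Ioi_subset_Ici_self hy) hxy
  simp only at this ⊢
  linarith

/-- The function `f(s) = 16α(v*)²/M₂ − s·log((2v* + |M₁|s)/(v* + |M₁|s))` is strictly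
decreasing on `(0, ∞)`. -/
theorem f_strictAntiOn
    (α vs M₂ M₁ : ℝ) (hα : 0 < α) (hvs : 0 < vs) (hM₂ : 0 < M₂) :
    StrictAntiOn
      (fun s : ℝ => 16 * α * vs ^ 2 / M₂ -
        s * Real.log ((2 * vs + |M₁| * s) / (vs + |M₁| * s)))
      (Set.Ioi 0) :=
  f_strictAntiOn_general α vs M₂ M₁ hvs
end

section
/- Let α, v*, s* > 0 and M₁ ∈ ℝ, and set t₂ = t₁ + log((2v* + |M₁|s*)/(v* + |M₁|s*))/(2αv*). Suppose s : [t₁, t₂] → ℝ is differentiable with s(t) > 0 on [t₁, t₂], s(t₁) = s*/2, and s'(t) ≤ 2αv*·s(t) + 2α|M₁|·s(t)² for all t ∈ [t₁, t₂]. Then for every t ∈ [t₁, t₂], s(t) ≤ v*s*/((2v* + |M₁|s*)·exp(−2αv*(t − t₁)) − |M₁|s*); in particular s(t) ≤ s* for all t ∈ [t₁, t₂]. -/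
/-!
Setting `c = 2αv*`, the substitution `u = 1/s` linearises the Riccati inequality
`s' ≤ c s + k s²` into `u' ≥ -c u - k`, so `exp (c (t - t₁)) (1/s + k/c)` is nondecreasing.
Evaluating at `t₁` gives the claimed bound, and `t₂` is exactly the time up to which its
denominator stays at least `v*`; the bound is then at most `v* s* / v* = s*`.
-/

open Real Set

section Riccati

variable {s ds : ℝ → ℝ} {a b c k : ℝ}

theorem monotoneOn_exp_mul_inv_add_of_deriv_le (hc : c ≠ 0)
    (hderiv : ∀ t ∈ Icc a b, HasDerivAt s (ds t) t) (hs : ∀ t ∈ Icc a b, s t ≠ 0)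
    (hineq : ∀ t ∈ Icc a b, ds t ≤ c * s t + k * s t ^ 2) :
    MonotoneOn (fun t => exp (c * (t - a)) * ((s t)⁻¹ + k / c)) (Icc a b) := by
  have hw : ∀ t ∈ Icc a b, HasDerivAt (fun t => exp (c * (t - a)) * ((s t)⁻¹ + k / c))
      (exp (c * (t - a)) * ((c * s t + k * s t ^ 2 - ds t) / s t ^ 2)) t := by
    intro t ht
    have he : HasDerivAt (fun t => exp (c * (t - a))) (exp (c * (t - a)) * c) t := by
      simpa using (((hasDerivAt_id t).sub_const a).const_mul c).exp
    refine (he.mul (((hderiv t ht).inv (hs t ht)).add_const (k / c))).congr_deriv ?_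
    have := hs t ht
    rw [Pi.inv_apply]
    field_simp
    ring
  refine monotoneOn_of_hasDerivWithinAt_nonneg (convex_Icc a b)
    (fun t ht => (hw t ht).continuousAt.continuousWithinAt)
    (fun t ht => (hw t (interior_subset ht)).hasDerivWithinAt) fun t ht => ?_
  have := hineq t (interior_subset ht)
  exact mul_nonneg (exp_pos _).le (div_nonneg (by linarith) (sq_nonneg _))

theorem exp_neg_mul_inv_add_sub_le_inv (hc : c ≠ 0)
    (hderiv : ∀ t ∈ Icc a b, HasDerivAt s (ds t) t) (hs : ∀ t ∈ Icc a b, s t ≠ 0)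
    (hineq : ∀ t ∈ Icc a b, ds t ≤ c * s t + k * s t ^ 2) {t : ℝ} (ht : t ∈ Icc a b) :
    exp (-c * (t - a)) * ((s a)⁻¹ + k / c) - k / c ≤ (s t)⁻¹ := by
  have hmono := monotoneOn_exp_mul_inv_add_of_deriv_le hc hderiv hs hineq
    (left_mem_Icc.2 (ht.1.trans ht.2)) ht ht.1
  simp only [sub_self, mul_zero, exp_zero, one_mul] at hmono
  calc exp (-c * (t - a)) * ((s a)⁻¹ + k / c) - k / c
      ≤ exp (-c * (t - a)) * (exp (c * (t - a)) * ((s t)⁻¹ + k / c)) - k / c := by gcongr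
    _ = (s t)⁻¹ := by
      rw [← mul_assoc, ← exp_add, neg_mul, neg_add_cancel, exp_zero, one_mul, add_sub_cancel_right]

end Riccati

theorem le_mul_exp_neg_sub_of_le_log {v p c t₁ t : ℝ} (hv : 0 < v) (hp : 0 ≤ p) (hc : 0 < c)
    (ht : t ≤ t₁ + log ((2 * v + p) / (v + p)) / c) :
    v ≤ (2 * v + p) * exp (-c * (t - t₁)) - p := by
  have hexp : (v + p) / (2 * v + p) ≤ exp (-c * (t - t₁)) := by
    have hlog : c * (t - t₁) ≤ log ((2 * v + p) / (v + p)) := by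
      rw [← le_div_iff₀' hc]
      linarith
    calc (v + p) / (2 * v + p) = exp (-log ((2 * v + p) / (v + p))) := by
          rw [exp_neg, exp_log (by positivity), inv_div]
      _ ≤ exp (-c * (t - t₁)) := exp_le_exp.2 (by linarith)
  have := mul_le_mul_of_nonneg_left hexp (by positivity : 0 ≤ 2 * v + p)
  rw [mul_div_cancel₀ _ (by positivity)] at this
  linarith

/-- Upper bound on `s` from the differential inequality
`s' ≤ 2αv*s + 2α|M₁|s²` with `s(t₁) = s*/2`, up to the explicit time `t₂`. -/
theorem s_upper_bound
    (α vs ss M₁ t₁ : ℝ) (hα : 0 < α) (hvs : 0 < vs) (hss : 0 < ss)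
    (t₂ : ℝ)
    (ht₂ : t₂ = t₁ + Real.log ((2 * vs + |M₁| * ss) / (vs + |M₁| * ss)) / (2 * α * vs))
    (s ds : ℝ → ℝ)
    (hderiv : ∀ t ∈ Set.Icc t₁ t₂, HasDerivAt s (ds t) t)
    (hpos : ∀ t ∈ Set.Icc t₁ t₂, 0 < s t)
    (hinit : s t₁ = ss / 2)
    (hineq : ∀ t ∈ Set.Icc t₁ t₂, ds t ≤ 2 * α * vs * s t + 2 * α * |M₁| * s t ^ 2) :
    ∀ t ∈ Set.Icc t₁ t₂,
      s t ≤ vs * ss /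
          ((2 * vs + |M₁| * ss) * Real.exp (-(2 * α * vs) * (t - t₁)) - |M₁| * ss) ∧
      s t ≤ ss := by
  intro t ht
  set D := (2 * vs + |M₁| * ss) * exp (-(2 * α * vs) * (t - t₁)) - |M₁| * ss
    with hD_def
  have hD : vs ≤ D :=
    le_mul_exp_neg_sub_of_le_log hvs (by positivity) (by positivity) (ht₂ ▸ ht.2)
  have hinv := exp_neg_mul_inv_add_sub_le_inv (by positivity) hderiv
    (fun x hx => (hpos x hx).ne') hineq ht
  rw [hinit] at hinv
  have hst := hpos t ht
  have hDinv : D / (vs * ss) ≤ (s t)⁻¹ := by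
    convert hinv using 1
    rw [hD_def]
    field_simp
  have hfirst : s t ≤ vs * ss / D := by
    rw [div_le_iff₀ (by positivity), le_inv_mul_iff₀ hst] at hDinv
    rw [le_div_iff₀ (by linarith)]
    linarith
  exact ⟨hfirst, hfirst.trans <| (div_le_div_of_nonneg_left (by positivity) hvs hD).trans_eq
    (mul_div_cancel_left₀ ss hvs.ne')⟩
end

section
/- Let p₁₁, p₁₂, p₂₁, p₂₂, α be positive reals with p₁₂p₂₁ < p₁₁p₂₂, let M₂, M₃ ∈ ℝ, and let v > 0, A > 0. The 3×3 real matrix J = [[−2p₁₁v², −2p₁₂vA, −M₂], [2p₂₁vA, 2p₂₂A², M₃], [0, 0, −2αv]] has exactly the eigenvalues λ₁ = p₂₂A² − p₁₁v² + √((p₂₂A² − p₁₁v²)² + 4(p₁₁p₂₂ − p₁₂p₂₁)v²A²), λ₂ = p₂₂A² − p₁₁v² − √((p₂₂A² − p₁₁v²)² + 4(p₁₁p₂₂ − p₁₂p₂₁)v²A²), and λ₃ = −2αv, and these satisfy λ₁ > 0, λ₂ < 0, λ₃ < 0. -/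
open Polynomial

/-- The Jacobian at the traveling-breather equilibrium EP₃⁻ has exactly the
eigenvalues `λ₁ > 0`, `λ₂ < 0`, `λ₃ = −2αv < 0` (as roots of its characteristic
polynomial, counted with multiplicity). -/
theorem eigenvalues_of_J_at_EP3
    (p₁₁ p₁₂ p₂₁ p₂₂ α M₂ M₃ v A : ℝ)
    (hp₁₁ : 0 < p₁₁) (hp₁₂ : 0 < p₁₂) (hp₂₁ : 0 < p₂₁) (hp₂₂ : 0 < p₂₂)
    (hα : 0 < α) (hS5 : p₁₂ * p₂₁ < p₁₁ * p₂₂)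
    (hv : 0 < v) (hA : 0 < A)
    (J : Matrix (Fin 3) (Fin 3) ℝ)
    (hJ : J = !![-2 * p₁₁ * v ^ 2, -2 * p₁₂ * v * A, -M₂;
                 2 * p₂₁ * v * A, 2 * p₂₂ * A ^ 2, M₃;
                 0, 0, -2 * α * v])
    (l₁ l₂ l₃ : ℝ)
    (hl₁ : l₁ = p₂₂ * A ^ 2 - p₁₁ * v ^ 2 +
      Real.sqrt ((p₂₂ * A ^ 2 - p₁₁ * v ^ 2) ^ 2 +
        4 * (p₁₁ * p₂₂ - p₁₂ * p₂₁) * v ^ 2 * A ^ 2))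
    (hl₂ : l₂ = p₂₂ * A ^ 2 - p₁₁ * v ^ 2 -
      Real.sqrt ((p₂₂ * A ^ 2 - p₁₁ * v ^ 2) ^ 2 +
        4 * (p₁₁ * p₂₂ - p₁₂ * p₂₁) * v ^ 2 * A ^ 2))
    (hl₃ : l₃ = -2 * α * v) :
    J.charpoly = (X - C l₁) * (X - C l₂) * (X - C l₃) ∧
      0 < l₁ ∧ l₂ < 0 ∧ l₃ < 0 := by
  set b : ℝ := p₂₂ * A ^ 2 - p₁₁ * v ^ 2 with hb
  set D : ℝ := b ^ 2 + 4 * (p₁₁ * p₂₂ - p₁₂ * p₂₁) * v ^ 2 * A ^ 2 with hDdef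
  have hDpos : 0 < D := by
    have h1 : 0 < (p₁₁ * p₂₂ - p₁₂ * p₂₁) * (v ^ 2 * A ^ 2) :=
      mul_pos (sub_pos.mpr hS5) (mul_pos (pow_pos hv 2) (pow_pos hA 2))
    nlinarith [sq_nonneg b]
  set s : ℝ := Real.sqrt D with hsdef
  have hs : s ^ 2 = D := Real.sq_sqrt hDpos.le
  have hsb : b ^ 2 < s ^ 2 := by
    rw [hs]; nlinarith [mul_pos (mul_pos (mul_pos hv hv) hA) hA,
      sub_pos.mpr hS5]
  have hspos : 0 < s := Real.sqrt_pos.mpr hDpos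
  refine ⟨?_, ?_, ?_, ?_⟩
  · subst hJ
    rw [Matrix.charpoly, Matrix.det_fin_three]
    simp [Matrix.charmatrix_apply_eq, Matrix.charmatrix_apply_ne]
    have hC : (C s) * (C s) = C D := by rw [← map_mul, ← sq, hs]
    rw [hl₁, hl₂, hl₃]
    simp only [hb, hDdef] at hC ⊢
    simp only [map_add, map_sub, map_mul, map_neg, map_ofNat, map_pow] at hC ⊢
    push_cast
    linear_combination (X + 2 * C α * C v) * hC
  · rw [hl₁]
    have : -b < s := by nlinarith
    linarith
  · rw [hl₂]
    have : b < s := by nlinarith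
    linarith
  · rw [hl₃]; nlinarith
end

section
/- Let p₁₁, p₁₂, p₂₁, p₂₂, α be positive reals with p₁₂p₂₁ < p₁₁p₂₂, let M₂, M₃ ∈ ℝ, and let v > 0, A > 0. Set λ₁ = p₂₂A² − p₁₁v² + √((p₂₂A² − p₁₁v²)² + 4(p₁₁p₂₂ − p₁₂p₂₁)v²A²) and m = −(p₂₂A² + p₁₁v² + √((p₂₂A² + p₁₁v²)² − 4p₁₂p₂₁v²A²))/(2p₁₂vA). Then m < 0 and the vector (1, m, 0)ᵀ is an eigenvector of the matrix J = [[−2p₁₁v², −2p₁₂vA, −M₂], [2p₂₁vA, 2p₂₂A², M₃], [0, 0, −2αv]] for the eigenvalue λ₁, i.e. J·(1, m, 0)ᵀ = λ₁·(1, m, 0)ᵀ. -/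
/-- `(1, m, 0)ᵀ` with `m < 0` is an eigenvector of the Jacobian at EP₃⁻ for the
unstable eigenvalue `λ₁`. -/
theorem unstable_eigenvector_of_J_at_EP3
    (p₁₁ p₁₂ p₂₁ p₂₂ α M₂ M₃ v A : ℝ)
    (hp₁₁ : 0 < p₁₁) (hp₁₂ : 0 < p₁₂) (hp₂₁ : 0 < p₂₁) (hp₂₂ : 0 < p₂₂)
    (hα : 0 < α) (hS5 : p₁₂ * p₂₁ < p₁₁ * p₂₂)
    (hv : 0 < v) (hA : 0 < A)
    (J : Matrix (Fin 3) (Fin 3) ℝ)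
    (hJ : J = !![-2 * p₁₁ * v ^ 2, -2 * p₁₂ * v * A, -M₂;
                 2 * p₂₁ * v * A, 2 * p₂₂ * A ^ 2, M₃;
                 0, 0, -2 * α * v])
    (l₁ m : ℝ)
    (hl₁ : l₁ = p₂₂ * A ^ 2 - p₁₁ * v ^ 2 +
      Real.sqrt ((p₂₂ * A ^ 2 - p₁₁ * v ^ 2) ^ 2 +
        4 * (p₁₁ * p₂₂ - p₁₂ * p₂₁) * v ^ 2 * A ^ 2))
    (hm : m = -(p₂₂ * A ^ 2 + p₁₁ * v ^ 2 +
      Real.sqrt ((p₂₂ * A ^ 2 + p₁₁ * v ^ 2) ^ 2 - 4 * p₁₂ * p₂₁ * v ^ 2 * A ^ 2)) /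
      (2 * p₁₂ * v * A)) :
    m < 0 ∧ J.mulVec ![1, m, 0] = l₁ • ![1, m, 0] := by
  subst hJ
  set B := p₂₂ * A ^ 2 with hB
  set P := p₁₁ * v ^ 2 with hP
  have hrad : (B - P) ^ 2 + 4 * (p₁₁ * p₂₂ - p₁₂ * p₂₁) * v ^ 2 * A ^ 2
      = (B + P) ^ 2 - 4 * p₁₂ * p₂₁ * v ^ 2 * A ^ 2 := by
    simp only [hB, hP]; ring
  set s := Real.sqrt ((B + P) ^ 2 - 4 * p₁₂ * p₂₁ * v ^ 2 * A ^ 2) with hsdef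
  have hl₁' : l₁ = B - P + s := by rw [hl₁, hrad]
  have hradnn : 0 ≤ (B + P) ^ 2 - 4 * p₁₂ * p₂₁ * v ^ 2 * A ^ 2 := by
    rw [← hrad]
    have : 0 < p₁₁ * p₂₂ - p₁₂ * p₂₁ := by linarith
    positivity
  have hs2 : s ^ 2 = (B + P) ^ 2 - 4 * p₁₂ * p₂₁ * v ^ 2 * A ^ 2 :=
    Real.sq_sqrt hradnn
  have hsnn : 0 ≤ s := Real.sqrt_nonneg _
  have hBP : 0 < B + P := by positivity
  have hden : 0 < 2 * p₁₂ * v * A := by positivity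
  have hm' : m = -(B + P + s) / (2 * p₁₂ * v * A) := hm
  have hmneg : m < 0 := by
    rw [hm']
    apply div_neg_of_neg_of_pos _ hden
    linarith
  refine ⟨hmneg, ?_⟩
  have hdne : (2 * p₁₂ * v * A) ≠ 0 := ne_of_gt hden
  funext i
  fin_cases i <;>
    simp [Matrix.mulVec, dotProduct, Fin.sum_univ_three, hl₁', hm']
  · field_simp
    ring
  · field_simp
    nlinarith [hs2]
end

section
/- Let p₁₁, p₁₂, p₂₁, p₂₂ be positive reals with p₁₂p₂₁ < p₁₁p₂₂ and let σ > 0. Then −(p₁₁/p₁₂)σ + (p₂₂ + p₁₁σ² + √((p₂₂ + p₁₁σ²)² − 4p₁₂p₂₁σ²))/(2p₁₂σ) > 0. Equivalently, with m = −(p₂₂ + p₁₁σ² + √((p₂₂ + p₁₁σ²)² − 4p₁₂p₂₁σ²))/(2p₁₂σ), one has −(p₁₁/p₁₂)σ − m > 0. -/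
/-- The slope of the v-nullcline at `−v_ep3` exceeds the slope of the unstable
eigenvector: with `m = −(p₂₂ + p₁₁σ² + √((p₂₂ + p₁₁σ²)² − 4p₁₂p₂₁σ²))/(2p₁₂σ)`,
one has `−(p₁₁/p₁₂)σ − m > 0`. -/
theorem nullcline_slope_gt_eigenvector_slope
    (p₁₁ p₁₂ p₂₁ p₂₂ σ : ℝ)
    (hp₁₁ : 0 < p₁₁) (hp₁₂ : 0 < p₁₂) (hp₂₁ : 0 < p₂₁) (hp₂₂ : 0 < p₂₂)
    (hS5 : p₁₂ * p₂₁ < p₁₁ * p₂₂) (hσ : 0 < σ)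
    (m : ℝ)
    (hm : m = -(p₂₂ + p₁₁ * σ ^ 2 +
      Real.sqrt ((p₂₂ + p₁₁ * σ ^ 2) ^ 2 - 4 * p₁₂ * p₂₁ * σ ^ 2)) /
      (2 * p₁₂ * σ)) :
    0 < -(p₁₁ / p₁₂) * σ - m := by
  set D := (p₂₂ + p₁₁ * σ ^ 2) ^ 2 - 4 * p₁₂ * p₂₁ * σ ^ 2 with hDdef
  have hσ2 : 0 < σ ^ 2 := by positivity
  have hD : (p₂₂ - p₁₁ * σ ^ 2) ^ 2 < D := by nlinarith
  have h1 : |p₂₂ - p₁₁ * σ ^ 2| < Real.sqrt D := by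
    rw [← Real.sqrt_sq_eq_abs]
    exact Real.sqrt_lt_sqrt (sq_nonneg _) hD
  have h2 : p₁₁ * σ ^ 2 - p₂₂ < Real.sqrt D := by
    have := neg_abs_le (p₂₂ - p₁₁ * σ ^ 2)
    linarith
  have hden : 0 < 2 * p₁₂ * σ := by positivity
  rw [hm, sub_pos]
  have : -(p₂₂ + p₁₁ * σ ^ 2 + Real.sqrt D) / (2 * p₁₂ * σ)
      < -(p₁₁ / p₁₂) * σ := by
    rw [div_lt_iff₀ hden]
    have : -(p₁₁ / p₁₂) * σ * (2 * p₁₂ * σ) = -(2 * p₁₁ * σ ^ 2) := by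
      field_simp
    rw [this]
    linarith
  exact this
end

section
/- Let p₁₁, α, M₂, M₃ be positive reals and v > 0. The 3×3 real matrix J₂ = [[−2p₁₁v², 0, −M₂], [0, 0, M₃], [0, 0, 2αv]] satisfies J₂·(x, y, z)ᵀ = 2αv·(x, y, z)ᵀ for (x, y, z) = (−M₂/(2p₁₁v² + 2αv), M₃/(2αv), 1); moreover x < 0, y > 0 and y/x < −M₃/M₂. -/
/-- The Jacobian at the traveling-pulse equilibrium EP₂⁺ has the unstable
eigenvalue `2αv` with eigenvector `(−M₂/(2p₁₁v² + 2αv), M₃/(2αv), 1)`, whose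
slope `y/x` is below `−M₃/M₂`. -/
theorem unstable_eigenvector_of_J_at_EP2
    (p₁₁ α M₂ M₃ v : ℝ)
    (hp₁₁ : 0 < p₁₁) (hα : 0 < α) (hM₂ : 0 < M₂) (hM₃ : 0 < M₃) (hv : 0 < v)
    (J₂ : Matrix (Fin 3) (Fin 3) ℝ)
    (hJ₂ : J₂ = !![-2 * p₁₁ * v ^ 2, 0, -M₂;
                   0, 0, M₃;
                   0, 0, 2 * α * v])
    (x y z : ℝ)
    (hx : x = -M₂ / (2 * p₁₁ * v ^ 2 + 2 * α * v))
    (hy : y = M₃ / (2 * α * v)) (hz : z = 1) :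
    J₂.mulVec ![x, y, z] = (2 * α * v) • ![x, y, z] ∧
      x < 0 ∧ 0 < y ∧ y / x < -(M₃ / M₂) := by
  have hd : 0 < 2 * p₁₁ * v ^ 2 + 2 * α * v := by positivity
  have he : 0 < 2 * α * v := by positivity
  have hxneg : x < 0 := by
    rw [hx]; exact div_neg_of_neg_of_pos (by linarith) hd
  have hypos : 0 < y := by rw [hy]; positivity
  refine ⟨?_, hxneg, hypos, ?_⟩
  · subst hJ₂ hz
    funext i
    fin_cases i <;>
      simp [Matrix.mulVec, dotProduct, Fin.sum_univ_succ, hx, hy] <;>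
      field_simp <;> ring
  · rw [div_lt_iff_of_neg hxneg, hx, hy]
    have h1 : -(M₃ / M₂) * (-M₂ / (2 * p₁₁ * v ^ 2 + 2 * α * v))
        = M₃ / (2 * p₁₁ * v ^ 2 + 2 * α * v) := by
      field_simp
    rw [h1]
    exact div_lt_div_of_pos_left hM₃ he
      (by nlinarith [mul_pos hp₁₁ (pow_pos hv 2)])
end

section
/- Let c, M₂ > 0, let a < b be reals, and let v, s : [a, b] → ℝ be differentiable with s(t) > 0, s'(t) ≤ −c·s(t), and v'(t) ≥ −M₂·s(t) for all t ∈ [a, b]. Then v(t) ≥ v(a) − M₂·s(a)/c for all t ∈ [a, b]. -/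
/-- Integral estimate: if `s' ≤ −cs` and `v' ≥ −M₂s` on `[a, b]` with `s > 0`,
then `v(t) ≥ v(a) − M₂s(a)/c` on `[a, b]`. -/
theorem v_lower_bound
    (c M₂ a b : ℝ) (hc : 0 < c) (hM₂ : 0 < M₂) (hab : a < b)
    (v s dv ds : ℝ → ℝ)
    (hv : ∀ t ∈ Set.Icc a b, HasDerivAt v (dv t) t)
    (hs : ∀ t ∈ Set.Icc a b, HasDerivAt s (ds t) t)
    (hspos : ∀ t ∈ Set.Icc a b, 0 < s t)
    (hds : ∀ t ∈ Set.Icc a b, ds t ≤ -c * s t)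
    (hdv : ∀ t ∈ Set.Icc a b, -M₂ * s t ≤ dv t) :
    ∀ t ∈ Set.Icc a b, v a - M₂ * s a / c ≤ v t := by
  set w : ℝ → ℝ := fun t => v t - M₂ / c * s t with hw
  have hw' : ∀ t ∈ Set.Icc a b, HasDerivAt w (dv t - M₂ / c * ds t) t := by
    intro t ht
    exact (hv t ht).sub ((hs t ht).const_mul (M₂ / c))
  have hmono : MonotoneOn w (Set.Icc a b) := by
    apply monotoneOn_of_deriv_nonneg (convex_Icc a b)
    · exact fun t ht => ((hw' t ht).differentiableAt).continuousAt.continuousWithinAt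
    · intro t ht
      rw [interior_Icc] at ht
      exact ((hw' t (Set.mem_Icc_of_Ioo ht)).differentiableAt).differentiableWithinAt
    · intro t ht
      rw [interior_Icc] at ht
      have ht' := Set.mem_Icc_of_Ioo ht
      rw [(hw' t ht').deriv]
      have h1 := hdv t ht'
      have h2 := hds t ht'
      have h3 : M₂ / c * ds t ≤ M₂ / c * (-c * s t) :=
        mul_le_mul_of_nonneg_left h2 (by positivity)
      have : M₂ / c * (-c * s t) = -(M₂ * s t) := by field_simp
      nlinarith
  intro t ht
  have ha : a ∈ Set.Icc a b := Set.left_mem_Icc.2 hab.le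
  have := hmono ha ht ht.1
  have hst : 0 < s t := hspos t ht
  have : v a - M₂ / c * s a ≤ v t - M₂ / c * s t := this
  have hpos : 0 < M₂ / c * s t := by positivity
  have heq : M₂ * s a / c = M₂ / c * s a := by ring
  linarith
end
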